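/- Let G be a connected simple graph on [n+1], B = B(G) its graphical building set, and suppose k_{n+1}(G) is minimal among all k_i(G). For J ∈ B with |J| ≥ 2 and J = I ∪ {m} where I ∈ B, m ∉ I, |I| ≥ 2, define f(I) = (|B|_I| − 1)/(|I| − 1) where B|_I = { K ∈ B : K ⊆ I }. Then f(J) ≥ f(I). -/

import Mathlib

/-!
Splitting `B|_J` according to whether a set contains `m` gives `|B|_J| = |B|_I| + c`, where
`c` counts the connected subsets of `J` through `m`, and `f(I) ≤ f(J)` becomes
`|B|_I| ≤ c(|I|-1) + 1`.
Fix for every `v ∈ J` a geodesic `P v` from `m` to `v` in `G[J]` and send `S ∈ B|_I` to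
`(S ∪ P s, s)`, where `s` is a vertex of `S` nearest to `m`. The other vertices of `P s` are
strictly nearer to `m`, hence miss `S`, so `S` is recovered from the pair. This injects `B|_I`
into the pairs `(T, t)` with `m ∈ T ∈ B|_J` and `t ∈ T \ {m}`: there are `|I|` choices of `t`
for `T = J` and at most `|I| - 1` for every other `T`.
-/

open scoped Classical

/-- The graphical building set of connected induced subgraphs. -/
noncomputable def graphBuildingSet {m : ℕ} (G : SimpleGraph (Fin m)) :
    Finset (Finset (Fin m)) :=
  Finset.univ.filter fun I => (G.induce (I : Set (Fin m))).Connected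

/-- `k_i(G)`: the number of connected induced subgraphs of `G` containing `i`. -/
noncomputable def kOf {m : ℕ} (G : SimpleGraph (Fin m)) (i : Fin m) : ℕ :=
  ((graphBuildingSet G).filter fun I => i ∈ I).card

/-- The restricted building set `B|_I = {K ∈ B : K ⊆ I}`. -/
noncomputable def restrictedBS {m : ℕ} (G : SimpleGraph (Fin m))
    (I : Finset (Fin m)) : Finset (Finset (Fin m)) :=
  (graphBuildingSet G).filter fun K => K ⊆ I

/-- The function `f(I) = (|B|_I| − 1)/(|I| − 1)` for `|I| ≥ 2`. -/
noncomputable def fOf {m : ℕ} (G : SimpleGraph (Fin m)) (I : Finset (Fin m)) : ℚ :=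
  ((restrictedBS G I).card - 1 : ℚ) / ((I.card - 1 : ℕ) : ℚ)

namespace SimpleGraph.Walk

variable {V : Type*} {H : SimpleGraph V} {u v w : V}

theorem dist_lt_of_mem_support_of_length_eq_dist (p : H.Walk u v) (hp : p.length = H.dist u v)
    (hw : w ∈ p.support) (hwv : w ≠ v) : H.dist u w < H.dist u v := by
  have hsplit := congrArg length (p.take_spec hw)
  rw [length_append] at hsplit
  have hdrop : (p.dropUntil w hw).length ≠ 0 := fun h => hwv (eq_of_length_eq_zero h)
  have := dist_le (p.takeUntil w hw)
  omega

end SimpleGraph.Walk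

theorem Finset.sum_card_erase_le {α : Type*} [DecidableEq α] {C : Finset (Finset α)}
    {J : Finset α} {m : α} (hJ : J ∈ C) (hC : ∀ T ∈ C, T ⊆ J ∧ m ∈ T) :
    ∑ T ∈ C, (T.erase m).card ≤ C.card * ((J.erase m).card - 1) + 1 := by
  have hmJ := (hC J hJ).2
  calc ∑ T ∈ C, (T.erase m).card
      ≤ ∑ T ∈ C, (((J.erase m).card - 1) + if T = J then 1 else 0) := by
        refine Finset.sum_le_sum fun T hT => ?_
        obtain ⟨hTJ, hmT⟩ := hC T hT
        split_ifs with hTeq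
        · subst hTeq
          omega
        · have := Finset.card_lt_card (hTJ.ssubset_of_ne hTeq)
          rw [Finset.card_erase_of_mem hmT, Finset.card_erase_of_mem hmJ]
          omega
    _ = C.card * ((J.erase m).card - 1) + 1 := by
        rw [Finset.sum_add_distrib, Finset.sum_const, smul_eq_mul, Finset.sum_ite_eq' C J,
          if_pos hJ]

theorem Finset.union_sdiff_erase_eq {α : Type*} [DecidableEq α] {S P : Finset α} {s : α}
    (hs : s ∈ S) (hSP : ∀ x ∈ P, x ∈ S → x = s) : (S ∪ P) \ P.erase s = S := by
  ext x
  simp only [mem_sdiff, mem_union, mem_erase]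
  grind

section BuildingSet

variable {N : ℕ} {G : SimpleGraph (Fin N)}

theorem mem_graphBuildingSet {S : Finset (Fin N)} :
    S ∈ graphBuildingSet G ↔ (G.induce (S : Set (Fin N))).Connected := by
  simp [graphBuildingSet]

theorem Finset.Nonempty.of_mem_graphBuildingSet {S : Finset (Fin N)}
    (h : S ∈ graphBuildingSet G) : S.Nonempty := by
  obtain ⟨⟨x, hx⟩⟩ := (mem_graphBuildingSet.mp h).nonempty
  exact ⟨x, hx⟩

theorem union_mem_graphBuildingSet {S T : Finset (Fin N)} (hS : S ∈ graphBuildingSet G)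
    (hT : T ∈ graphBuildingSet G) (hST : (S ∩ T).Nonempty) :
    S ∪ T ∈ graphBuildingSet G := by
  rw [mem_graphBuildingSet, Finset.coe_union]
  exact SimpleGraph.induce_union_connected (mem_graphBuildingSet.mp hS).preconnected
    (mem_graphBuildingSet.mp hT).preconnected (by exact_mod_cast hST)

theorem support_toFinset_mem_graphBuildingSet {x y : Fin N} (q : G.Walk x y) :
    q.support.toFinset ∈ graphBuildingSet G := by
  rw [mem_graphBuildingSet]
  have hsupp : (q.support.toFinset : Set (Fin N)) = {v | v ∈ q.support} := by ext; simp
  rw [hsupp]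
  exact q.connected_induce_support

theorem exists_geodesic_family {J : Finset (Fin N)} {m : Fin N} (hJ : J ∈ graphBuildingSet G)
    (hm : m ∈ J) : ∃ (d : Fin N → ℕ) (P : Fin N → Finset (Fin N)), ∀ v ∈ J,
      P v ∈ graphBuildingSet G ∧ P v ⊆ J ∧ m ∈ P v ∧ v ∈ P v ∧
        ∀ w ∈ P v, w ≠ v → d w < d v := by
  set H := G.induce (J : Set (Fin N))
  have hH : H.Connected := mem_graphBuildingSet.mp hJ
  let r : (J : Set (Fin N)) := ⟨m, hm⟩
  choose p hp using hH.exists_walk_length_eq_dist r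
  let d (w : Fin N) : ℕ := if h : w ∈ J then H.dist r ⟨w, h⟩ else 0
  let f := (SimpleGraph.Embedding.induce (G := G) (J : Set (Fin N))).toHom
  refine ⟨d, fun v => if h : v ∈ J then ((p ⟨v, h⟩).map f).support.toFinset else ∅,
    fun v hv => ?_⟩
  simp only [dif_pos hv]
  have hmem (w : Fin N) : w ∈ ((p ⟨v, hv⟩).map f).support.toFinset ↔
      ∃ a ∈ (p ⟨v, hv⟩).support, (a : Fin N) = w := by
    simp only [List.mem_toFinset, SimpleGraph.Walk.support_map, List.mem_map]
    rfl
  refine ⟨support_toFinset_mem_graphBuildingSet _, fun w hw => ?_,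
    (hmem m).2 ⟨r, (p _).start_mem_support, rfl⟩,
    (hmem v).2 ⟨_, (p _).end_mem_support, rfl⟩,
    fun w hw hwv => ?_⟩
  · obtain ⟨a, -, rfl⟩ := (hmem w).1 hw
    exact a.2
  · obtain ⟨a, ha, rfl⟩ := (hmem w).1 hw
    simp only [d, dif_pos (Finset.mem_coe.mp a.2), dif_pos hv]
    exact (p _).dist_lt_of_mem_support_of_length_eq_dist (hp _) ha
      fun h => hwv (congrArg Subtype.val h)

theorem card_restrictedBS_insert {I : Finset (Fin N)} {m : Fin N} (hmI : m ∉ I) :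
    (restrictedBS G (insert m I)).card =
      (restrictedBS G I).card + ((restrictedBS G (insert m I)).filter (m ∈ ·)).card := by
  rw [← Finset.card_filter_add_card_filter_not (s := restrictedBS G (insert m I)) (m ∈ ·),
    add_comm]
  congr 2
  ext K
  simp only [restrictedBS, Finset.mem_filter, and_assoc]
  refine and_congr_right fun _ =>
    ⟨fun ⟨hK, hmK⟩ => (Finset.subset_insert_iff_of_notMem hmK).1 hK,
      fun hK => ⟨hK.trans (Finset.subset_insert m I), fun hmK => hmI (hK hmK)⟩⟩

theorem card_restrictedBS_le_sum_card_erase {I : Finset (Fin N)} {m : Fin N} (hmI : m ∉ I)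
    (hJ : insert m I ∈ graphBuildingSet G) :
    (restrictedBS G I).card ≤
      ∑ T ∈ (restrictedBS G (insert m I)).filter (m ∈ ·), (T.erase m).card := by
  obtain ⟨d, P, hP⟩ := exists_geodesic_family hJ (Finset.mem_insert_self m I)
  have hnearest : ∀ S ∈ restrictedBS G I, ∃ s ∈ S, ∀ x ∈ S, d s ≤ d x := fun S hS =>
    S.exists_min_image d (Finset.Nonempty.of_mem_graphBuildingSet (Finset.mem_filter.mp hS).1)
  have : Nonempty (Fin N) := ⟨m⟩
  choose! s hsS hsmin using hnearest
  have hsI : ∀ S ∈ restrictedBS G I, s S ∈ I := fun S hS =>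
    (Finset.mem_filter.mp hS).2 (hsS S hS)
  have hPs (S : Finset (Fin N)) (hS : S ∈ restrictedBS G I) :=
    hP (s S) (Finset.mem_insert_of_mem (hsI S hS))
  have hrecover : ∀ S ∈ restrictedBS G I, (S ∪ P (s S)) \ (P (s S)).erase (s S) = S :=
    fun S hS => Finset.union_sdiff_erase_eq (hsS S hS) fun x hxP hxS =>
      by_contra fun hne => ((hPs S hS).2.2.2.2 x hxP hne).not_ge (hsmin S hS x hxS)
  rw [← Finset.card_sigma]
  refine Finset.card_le_card_of_injOn (fun S => ⟨S ∪ P (s S), s S⟩) (fun S hS => ?_)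
    (fun S₁ h₁ S₂ h₂ heq => ?_)
  · obtain ⟨hSB, hSI⟩ := Finset.mem_filter.mp hS
    obtain ⟨hPB, hPJ, hmP, hsP, -⟩ := hPs S hS
    refine Finset.mem_sigma.mpr ⟨Finset.mem_filter.mpr ⟨Finset.mem_filter.mpr
      ⟨union_mem_graphBuildingSet hSB hPB ⟨s S, Finset.mem_inter.mpr ⟨hsS S hS, hsP⟩⟩,
        Finset.union_subset (hSI.trans (Finset.subset_insert m I)) hPJ⟩,
      Finset.mem_union_right S hmP⟩,
      Finset.mem_erase.mpr
        ⟨fun h => hmI (h ▸ hsI S hS), Finset.mem_union_left _ (hsS S hS)⟩⟩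
  · have hunion : S₁ ∪ P (s S₁) = S₂ ∪ P (s S₂) := congrArg Sigma.fst heq
    have hnearest : s S₁ = s S₂ := congrArg Sigma.snd heq
    rw [← hrecover S₁ h₁, ← hrecover S₂ h₂, hunion, hnearest]

theorem fOf_le_fOf_of_card_restrictedBS_le {I J : Finset (Fin N)} {c : ℕ} (hIcard : 2 ≤ I.card)
    (hJcard : J.card = I.card + 1)
    (hsplit : (restrictedBS G J).card = (restrictedBS G I).card + c)
    (hbound : (restrictedBS G I).card ≤ c * (I.card - 1) + 1) :
    fOf G I ≤ fOf G J := by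
  unfold fOf
  rw [hsplit, hJcard, Nat.add_sub_cancel]
  have hk : ((I.card - 1 : ℕ) : ℚ) = I.card - 1 := by
    rw [Nat.cast_sub (by omega : 1 ≤ I.card), Nat.cast_one]
  have hk2 : (2 : ℚ) ≤ I.card := by exact_mod_cast hIcard
  have hb : ((restrictedBS G I).card : ℚ) ≤ c * (I.card - 1) + 1 := by
    rw [← hk]; exact_mod_cast hbound
  rw [hk, div_le_div_iff₀ (by linarith) (by linarith)]
  push_cast
  nlinarith

end BuildingSet

theorem f_monotone_on_nested_general {n : ℕ} (G : SimpleGraph (Fin (n + 1)))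
    (I J : Finset (Fin (n + 1))) (m : Fin (n + 1)) (hmI : m ∉ I)
    (hIcard : 2 ≤ I.card)
    (hJdef : J = insert m I) (hJ : J ∈ graphBuildingSet G) :
    fOf G I ≤ fOf G J := by
  subst hJdef
  have hsum := Finset.sum_card_erase_le (C := (restrictedBS G (insert m I)).filter (m ∈ ·))
    (J := insert m I) (m := m) (by simp [restrictedBS, hJ]) (fun T hT => by simp_all [restrictedBS])
  rw [Finset.erase_insert hmI] at hsum
  exact fOf_le_fOf_of_card_restrictedBS_le hIcard (Finset.card_insert_of_notMem hmI)
    (card_restrictedBS_insert hmI) ((card_restrictedBS_le_sum_card_erase hmI hJ).trans hsum)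

/-- Let `G` be a connected simple graph on `[n+1]` with `k_{n+1}`
minimal. If `I ∈ B(G)` with `|I| ≥ 2`, `m ∉ I` and `J = I ∪ {m} ∈ B(G)`, then
`f(J) ≥ f(I)` where `f(I) = (|B|_I| − 1)/(|I| − 1)`. -/
theorem f_monotone_on_nested {n : ℕ} (G : SimpleGraph (Fin (n + 1)))
    (hG : G.Connected)
    (hmin : ∀ i : Fin (n + 1), kOf G (Fin.last n) ≤ kOf G i)
    (I J : Finset (Fin (n + 1))) (m : Fin (n + 1)) (hmI : m ∉ I)
    (hI : I ∈ graphBuildingSet G) (hIcard : 2 ≤ I.card)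
    (hJdef : J = insert m I) (hJ : J ∈ graphBuildingSet G) :
    fOf G I ≤ fOf G J :=
  f_monotone_on_nested_general G I J m hmI hIcard hJdef hJ
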